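/- Let A be an essentially small finitary abelian category over a finite field with q elements. For any objects L, M, N of A, let g^L_{M,N} denote the number of subobjects X of L with X ≅ N and L/X ≅ M, and let Ext^1(M,N)_L denote the set of equivalence classes of short exact sequences 0 → N → L → M → 0 (extensions of M by N with middle term isomorphic to L). Then g^L_{M,N} = (|Ext^1_A(M,N)_L| / |Hom_A(M,N)|) · (|Aut_A(L)| / (|Aut_A(M)|·|Aut_A(N)|)) (the Riedtmann–Peng formula). -/

import Mathlib

open CategoryTheory Limits

namespace RiedtmannPeng

variable {C : Type*} [Category C] [Abelian C]

/-- The Hall number `g^L_{M,N}`: the number of subobjects `X ⊆ L` with `X ≅ N` and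
`L/X ≅ M`. -/
noncomputable def gHall (L M N : C) : ℕ :=
  Nat.card {X : Subobject L // Nonempty ((X : C) ≅ N) ∧ Nonempty (cokernel X.arrow ≅ M)}

/-- Short exact sequences `0 → N → L → M → 0` with middle term the given object `L`. -/
def ExtW (M N L : C) : Type _ :=
  {fg : (N ⟶ L) × (L ⟶ M) //
    ∃ w : fg.1 ≫ fg.2 = 0, (ShortComplex.mk fg.1 fg.2 w).ShortExact}

/-- `Ext^1_A(M,N)_L`: equivalence classes of short exact sequences `0 → N → L → M → 0`
with middle term `L`, two sequences being equivalent when they differ by an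
automorphism of `L` compatible with the identity on `M` and `N`. -/
def ExtClassesL (M N L : C) : Type _ :=
  Quot (fun p q : ExtW M N L =>
    ∃ φ : Aut L, p.1.1 ≫ φ.hom = q.1.1 ∧ φ.hom ≫ q.1.2 = p.1.2)

/-
Both `Aut L` and `Aut N × Aut M` act on the set `W` of short exact sequences
`0 → N → L → M → 0`. The orbits of `Aut L` are the classes in `Ext¹(M,N)_L`, and the
stabilizer of `(f, g)` consists of the automorphisms `1 + g h f` with `h : M ⟶ N`, so
`|W| · |Hom(M,N)| = |Ext¹(M,N)_L| · |Aut L|`. The action of `Aut N × Aut M` is free and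
`(f, g) ↦ im f` identifies its orbits with the subobjects counted by `g^L_{M,N}`, so
`|W| = g^L_{M,N} · |Aut N| · |Aut M|`.
-/

open MulAction

theorem _root_.MulAction.card_mul_eq_card_orbits_mul_card_group {G X : Type*} [Group G]
    [MulAction G X] [Finite X] {m : ℕ}
    (hm : ∀ x : X, Nat.card (stabilizer G x) = m) :
    Nat.card X * m = Nat.card (orbitRel.Quotient G X) * Nat.card G := by
  have := Fintype.ofFinite (orbitRel.Quotient G X)
  calc Nat.card X * m = (∑ ω : orbitRel.Quotient G X, Nat.card (orbit G ω.out)) * m := by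
        rw [Nat.card_congr (selfEquivSigmaOrbits G X), Nat.card_sigma]
    _ = ∑ _ω : orbitRel.Quotient G X, Nat.card G := by
        rw [Finset.sum_mul]
        refine Finset.sum_congr rfl fun ω _ => ?_
        rw [← hm ω.out, ← Nat.card_prod, Nat.card_congr (orbitProdStabilizerEquivGroup G _)]
    _ = Nat.card (orbitRel.Quotient G X) * Nat.card G := by
        rw [Finset.sum_const, Finset.card_univ, smul_eq_mul, ← Nat.card_eq_fintype_card]

section ShortExact

variable {S : ShortComplex C}

theorem _root_.CategoryTheory.ShortComplex.ShortExact.g_comp_comp_f_injective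
    (hS : S.ShortExact) : Function.Injective fun h : S.X₃ ⟶ S.X₁ => S.g ≫ h ≫ S.f := by
  have := hS.mono_f
  have := hS.epi_g
  intro h₁ h₂ hh
  simpa only [cancel_epi, cancel_mono] using hh

theorem _root_.CategoryTheory.ShortComplex.ShortExact.exists_g_comp_comp_f_eq
    (hS : S.ShortExact) {u : S.X₂ ⟶ S.X₂} (hfu : S.f ≫ u = 0) (hug : u ≫ S.g = 0) :
    ∃ h : S.X₃ ⟶ S.X₁, S.g ≫ h ≫ S.f = u := by
  have := hS.mono_f
  have := hS.epi_g
  have hv : hS.exact.desc u hfu ≫ S.g = 0 := by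
    rw [← cancel_epi S.g, ← Category.assoc, hS.exact.g_desc, hug, comp_zero]
  exact ⟨hS.exact.lift _ hv, by rw [hS.exact.lift_f, hS.exact.g_desc]⟩

end ShortExact

namespace ExtW

variable {L M N : C}

theorem zero (w : ExtW M N L) : w.1.1 ≫ w.1.2 = 0 := w.2.fst

theorem shortExact (w : ExtW M N L) : (ShortComplex.mk _ _ w.zero).ShortExact := w.2.snd

instance (w : ExtW M N L) : Mono w.1.1 := w.shortExact.mono_f

instance (w : ExtW M N L) : Epi w.1.2 := w.shortExact.epi_g

@[ext]
theorem ext {w w' : ExtW M N L} (hf : w.1.1 = w'.1.1) (hg : w.1.2 = w'.1.2) : w = w' :=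
  Subtype.ext (Prod.ext hf hg)

def isoMap {L' M' N' : C} (a : N ≅ N') (φ : L ≅ L') (b : M ≅ M') (w : ExtW M N L) :
    ExtW M' N' L' :=
  ⟨(a.inv ≫ w.1.1 ≫ φ.hom, φ.inv ≫ w.1.2 ≫ b.hom), by simp [reassoc_of% w.zero],
    ShortComplex.shortExact_of_iso (ShortComplex.isoMk a φ b (by simp) (by simp)) w.shortExact⟩

instance : SMul (Aut L) (ExtW M N L) := ⟨fun φ => isoMap (Iso.refl N) φ (Iso.refl M)⟩

@[simp]
theorem autL_smul_fst (φ : Aut L) (w : ExtW M N L) : (φ • w).1.1 = w.1.1 ≫ φ.hom :=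
  Category.id_comp _

@[simp]
theorem autL_smul_snd (φ : Aut L) (w : ExtW M N L) : (φ • w).1.2 = φ.inv ≫ w.1.2 :=
  Category.assoc _ _ _ |>.symm.trans (Category.comp_id _)

instance : MulAction (Aut L) (ExtW M N L) where
  one_smul w := ext ((autL_smul_fst 1 w).trans (Category.comp_id _))
    ((autL_smul_snd 1 w).trans (Category.id_comp _))
  mul_smul φ ψ w := by
    ext
    · simp only [autL_smul_fst]
      exact (Category.assoc _ _ _).symm
    · simp only [autL_smul_snd]
      exact Category.assoc _ _ _

theorem autL_smul_eq_iff {p q : ExtW M N L} {φ : Aut L} :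
    φ • p = q ↔ p.1.1 ≫ φ.hom = q.1.1 ∧ φ.hom ≫ q.1.2 = p.1.2 := by
  rw [ExtW.ext_iff, autL_smul_fst, autL_smul_snd]
  exact and_congr_right' ((Iso.inv_comp_eq (φ : L ≅ L)).trans eq_comm)

def unipotentAut (w : ExtW M N L) (h : M ⟶ N) : Aut L where
  hom := 𝟙 L + w.1.2 ≫ h ≫ w.1.1
  inv := 𝟙 L - w.1.2 ≫ h ≫ w.1.1
  hom_inv_id := by
    simp [Preadditive.comp_sub, Preadditive.add_comp, reassoc_of% w.zero]
  inv_hom_id := by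
    simp [Preadditive.comp_add, Preadditive.sub_comp, reassoc_of% w.zero]

theorem unipotentAut_mem_stabilizer (w : ExtW M N L) (h : M ⟶ N) :
    w.unipotentAut h ∈ stabilizer (Aut L) w := by
  rw [mem_stabilizer_iff, autL_smul_eq_iff]
  constructor
  · simp [unipotentAut, Preadditive.comp_add, reassoc_of% w.zero]
  · simp [unipotentAut, Preadditive.add_comp, w.zero]

theorem card_stabilizer_autL (w : ExtW M N L) :
    Nat.card (stabilizer (Aut L) w) = Nat.card (M ⟶ N) := by
  refine (Nat.card_congr (Equiv.ofBijective
    (fun h => (⟨w.unipotentAut h, w.unipotentAut_mem_stabilizer h⟩ : stabilizer (Aut L) w))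
    ⟨fun h₁ h₂ hh => ?_, fun ⟨φ, hφ⟩ => ?_⟩)).symm
  · apply w.shortExact.g_comp_comp_f_injective
    simpa [unipotentAut] using congrArg (fun φ : stabilizer (Aut L) w => φ.1.hom) hh
  · obtain ⟨hf, hg⟩ := autL_smul_eq_iff.mp (mem_stabilizer_iff.mp hφ)
    obtain ⟨h, hh⟩ := w.shortExact.exists_g_comp_comp_f_eq (u := φ.hom - 𝟙 L)
      (by simp [Preadditive.comp_sub, hf]) (by simp [Preadditive.sub_comp, hg])
    refine ⟨h, Subtype.ext (Aut.ext ?_)⟩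
    change 𝟙 L + w.1.2 ≫ h ≫ w.1.1 = φ.hom
    rw [hh, add_sub_cancel]

end ExtW

def extClassesEquivOrbits (M N L : C) :
    ExtClassesL M N L ≃ orbitRel.Quotient (Aut L) (ExtW M N L) :=
  Quot.congrRight fun p q => by
    rw [orbitRel_apply, mem_orbit_symm, mem_orbit_iff]
    exact exists_congr fun φ => ExtW.autL_smul_eq_iff.symm

def hallSubobjects (L M N : C) : Set (Subobject L) :=
  {X | Nonempty ((X : C) ≅ N) ∧ Nonempty (cokernel X.arrow ≅ M)}

namespace ExtW

variable {L M N : C}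

instance : SMul (Aut N × Aut M) (ExtW M N L) := ⟨fun ab => isoMap ab.1 (Iso.refl L) ab.2⟩

@[simp]
theorem autNM_smul_fst (ab : Aut N × Aut M) (w : ExtW M N L) :
    (ab • w).1.1 = ab.1.inv ≫ w.1.1 :=
  (Category.assoc _ _ _).symm.trans (Category.comp_id _)

@[simp]
theorem autNM_smul_snd (ab : Aut N × Aut M) (w : ExtW M N L) :
    (ab • w).1.2 = w.1.2 ≫ ab.2.hom :=
  Category.id_comp _

instance : MulAction (Aut N × Aut M) (ExtW M N L) where
  one_smul w := ext ((autNM_smul_fst 1 w).trans (Category.id_comp _))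
    ((autNM_smul_snd 1 w).trans (Category.comp_id _))
  mul_smul ab ab' w := by
    ext
    · simp only [autNM_smul_fst]
      exact Category.assoc _ _ _
    · simp only [autNM_smul_snd]
      exact (Category.assoc _ _ _).symm

theorem stabilizer_autNM_eq_bot (w : ExtW M N L) : stabilizer (Aut N × Aut M) w = ⊥ := by
  refine (Subgroup.eq_bot_iff_forall _).mpr fun ab hab => ?_
  rw [mem_stabilizer_iff, ExtW.ext_iff, autNM_smul_fst, autNM_smul_snd] at hab
  obtain ⟨hf, hg⟩ := hab
  have hN : ab.1⁻¹ = 1 := Aut.ext ((cancel_mono w.1.1).mp (hf.trans (Category.id_comp _).symm))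
  have hM : ab.2 = 1 := Aut.ext ((cancel_epi w.1.2).mp (hg.trans (Category.comp_id _).symm))
  exact Prod.ext (inv_eq_one.mp hN) hM

noncomputable def subobject (w : ExtW M N L) : Subobject L := Subobject.mk w.1.1

theorem nonempty_cokernel_iso (w : ExtW M N L) {X : C} (i : X ⟶ L) (e : X ≅ N)
    (he : e.hom ≫ w.1.1 = i) : Nonempty (cokernel i ≅ M) := by
  have hi : i ≫ w.1.2 = 0 := by rw [← he, Category.assoc, w.zero, comp_zero]
  have hS : (ShortComplex.mk i w.1.2 hi).ShortExact :=
    ShortComplex.shortExact_of_iso (ShortComplex.isoMk e.symm (Iso.refl L) (Iso.refl M)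
      (by simp [← he]) (by simp)) w.shortExact
  have := hS.epi_g
  exact ⟨(cokernelIsCokernel i).coconePointUniqueUpToIso hS.exact.gIsCokernel⟩

theorem subobject_mem_hallSubobjects (w : ExtW M N L) : w.subobject ∈ hallSubobjects L M N :=
  ⟨⟨Subobject.underlyingIso _⟩,
    w.nonempty_cokernel_iso _ _ (Subobject.underlyingIso_hom_comp_eq_mk w.1.1)⟩

theorem subobject_smul (ab : Aut N × Aut M) (w : ExtW M N L) :
    (ab • w).subobject = w.subobject :=
  Subobject.mk_eq_mk_of_comm _ _ ab.1.symm (autNM_smul_fst ab w).symm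

theorem exists_autM_comp_snd_eq {w w' : ExtW M N L} (e : N ≅ N) (he : e.hom ≫ w'.1.1 = w.1.1) :
    ∃ b : Aut M, w.1.2 ≫ b.hom = w'.1.2 := by
  have h₁ : w.1.1 ≫ w'.1.2 = 0 := by rw [← he, Category.assoc, w'.zero, comp_zero]
  have h₂ : w'.1.1 ≫ w.1.2 = 0 := by
    rw [← cancel_epi e.hom, ← Category.assoc, he, w.zero, comp_zero]
  refine ⟨⟨w.shortExact.exact.desc _ h₁, w'.shortExact.exact.desc _ h₂, ?_, ?_⟩, ?_⟩
  · rw [← cancel_epi w.1.2, Category.comp_id]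
    exact (w.shortExact.exact.g_desc_assoc _ _ _).trans (w'.shortExact.exact.g_desc _ _)
  · rw [← cancel_epi w'.1.2, Category.comp_id]
    exact (w'.shortExact.exact.g_desc_assoc _ _ _).trans (w.shortExact.exact.g_desc _ _)
  · exact w.shortExact.exact.g_desc _ _

theorem mem_orbit_of_subobject_eq {w w' : ExtW M N L} (h : w.subobject = w'.subobject) :
    w' ∈ orbit (Aut N × Aut M) w := by
  set e := Subobject.isoOfMkEqMk _ _ h
  have he : e.hom ≫ w'.1.1 = w.1.1 := Subobject.ofMkLEMk_comp h.le
  obtain ⟨b, hb⟩ := exists_autM_comp_snd_eq e he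
  refine ⟨(e, b), ExtW.ext ?_ ?_⟩
  · simp [← he]
  · simpa using hb

theorem exists_subobject_eq {X : Subobject L} (hX : X ∈ hallSubobjects L M N) :
    ∃ w : ExtW M N L, w.subobject = X := by
  obtain ⟨⟨e₁⟩, ⟨e₂⟩⟩ := hX
  have hS : (ShortComplex.mk X.arrow (cokernel.π X.arrow) (cokernel.condition _)).ShortExact :=
    { exact := ShortComplex.exact_of_g_is_cokernel _ (cokernelIsCokernel _) }
  exact ⟨⟨(e₁.inv ≫ X.arrow, cokernel.π X.arrow ≫ e₂.hom), by simp,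
    ShortComplex.shortExact_of_iso
      (ShortComplex.isoMk e₁ (Iso.refl L) e₂ (by simp) (by simp)) hS⟩,
    Subobject.mk_eq_of_comm _ e₁.symm rfl⟩

end ExtW

noncomputable def hallOrbitEquiv (L M N : C) :
    orbitRel.Quotient (Aut N × Aut M) (ExtW M N L) ≃ hallSubobjects L M N :=
  Equiv.ofBijective
    (Quotient.lift (fun w => ⟨w.subobject, w.subobject_mem_hallSubobjects⟩) fun _ w' h => by
      obtain ⟨ab, rfl⟩ := h
      exact Subtype.ext (ExtW.subobject_smul ab w'))
    ⟨by
      rintro ⟨w⟩ ⟨w'⟩ h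
      exact Quotient.sound (mem_orbit_symm.mp (ExtW.mem_orbit_of_subobject_eq
        (congrArg Subtype.val h))),
    by
      rintro ⟨X, hX⟩
      obtain ⟨w, rfl⟩ := ExtW.exists_subobject_eq hX
      exact ⟨⟦w⟧, rfl⟩⟩

instance {X : C} [Finite (X ⟶ X)] : Finite (Aut X) :=
  Finite.of_injective (fun φ : Aut X => φ.hom) fun _ _ => Aut.ext

instance {L M N : C} [Finite (N ⟶ L)] [Finite (L ⟶ M)] : Finite (ExtW M N L) :=
  Subtype.finite

section Counting

variable {L M N : C} [Finite (N ⟶ L)] [Finite (L ⟶ M)]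

theorem card_extW_mul_card_hom :
    Nat.card (ExtW M N L) * Nat.card (M ⟶ N) =
      Nat.card (ExtClassesL M N L) * Nat.card (Aut L) := by
  rw [card_mul_eq_card_orbits_mul_card_group ExtW.card_stabilizer_autL,
    Nat.card_congr (extClassesEquivOrbits M N L)]

theorem card_extW_eq_gHall_mul :
    Nat.card (ExtW M N L) = gHall L M N * (Nat.card (Aut N) * Nat.card (Aut M)) := by
  have h := card_mul_eq_card_orbits_mul_card_group (G := Aut N × Aut M) (X := ExtW M N L)
    (m := 1) fun w => by rw [ExtW.stabilizer_autNM_eq_bot, Subgroup.card_bot]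
  rwa [mul_one, Nat.card_congr (hallOrbitEquiv L M N), Nat.card_prod] at h

end Counting

theorem riedtmann_peng_general
    [finitaryHom : ∀ M N : C, Finite (M ⟶ N)]
    (L M N : C) :
    (gHall L M N : ℚ) =
      (Nat.card (ExtClassesL M N L) : ℚ) / (Nat.card (M ⟶ N) : ℚ) *
        ((Nat.card (Aut L) : ℚ) / ((Nat.card (Aut M) : ℚ) * (Nat.card (Aut N) : ℚ))) := by
  have hHom : (Nat.card (M ⟶ N) : ℚ) ≠ 0 := Nat.cast_ne_zero.mpr Nat.card_pos.ne'
  have hAutM : (Nat.card (Aut M) : ℚ) ≠ 0 := Nat.cast_ne_zero.mpr Nat.card_pos.ne'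
  have hAutN : (Nat.card (Aut N) : ℚ) ≠ 0 := Nat.cast_ne_zero.mpr Nat.card_pos.ne'
  have key : gHall L M N * (Nat.card (M ⟶ N) * (Nat.card (Aut M) * Nat.card (Aut N))) =
      Nat.card (ExtClassesL M N L) * Nat.card (Aut L) := by
    rw [← card_extW_mul_card_hom, card_extW_eq_gHall_mul]
    ring
  rw [div_mul_div_comm, eq_div_iff (mul_ne_zero hHom (mul_ne_zero hAutM hAutN))]
  exact_mod_cast key

/-- Riedtmann–Peng formula: for a finitary abelian category over a finite
field, `g^L_{M,N} = (|Ext^1(M,N)_L| / |Hom(M,N)|) · (|Aut L| / (|Aut M|·|Aut N|))`. -/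
theorem riedtmann_peng
    (𝕜 : Type) [Field 𝕜] [Fintype 𝕜] [CategoryTheory.Linear 𝕜 C]
    [EssentiallySmall C]
    [finitaryHom : ∀ M N : C, Finite (M ⟶ N)]
    (finitaryExt : ∀ M N L : C, Finite (ExtClassesL M N L))
    (L M N : C) :
    (gHall L M N : ℚ) =
      (Nat.card (ExtClassesL M N L) : ℚ) / (Nat.card (M ⟶ N) : ℚ) *
        ((Nat.card (Aut L) : ℚ) / ((Nat.card (Aut M) : ℚ) * (Nat.card (Aut N) : ℚ))) :=
  riedtmann_peng_general (finitaryHom := finitaryHom) L M N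

end RiedtmannPeng
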